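/- arXiv:1001.1375 — 2 statements merged into one kernel-verified Lean document; each statement's English description precedes it below -/
import Mathlib

section
/- In the free associative algebra A on a set X over a field of characteristic zero, with lower central series L_1 = A and L_{k+1} = [A, L_k] (the span of commutators [a, l] with a ∈ A, l ∈ L_k), for any elements x, y, z, u, v ∈ A the element [x·[y,[z,u]], v] lies in L_4. -/
set_option maxRecDepth 100000
set_option maxHeartbeats 1600000

/-- The commutator `[a,b] = a*b - b*a`. -/
def br {A : Type*} [Ring A] (a b : A) : A := a * b - b * a

/-- Lower central series: `lcs K A 1 = A`, `lcs K A (k+1) = span {[a,l] | a ∈ A, l ∈ lcs K A k}`. -/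
def lcs (K : Type*) [Field K] (A : Type*) [Ring A] [Algebra K A] : ℕ → Submodule K A
  | 0 => ⊤
  | 1 => ⊤
  | (k+2) => Submodule.span K {x : A | ∃ a l : A, l ∈ lcs K A (k+1) ∧ x = a * l - l * a}

lemma mem4 {K : Type*} [Field K] {A : Type*} [Ring A] [Algebra K A] (s p a b : A) :
    br s (br p (br a b)) ∈ lcs K A 4 := by
  show _ ∈ Submodule.span K {x : A | ∃ c l : A, l ∈ lcs K A 3 ∧ x = c * l - l * c}
  refine Submodule.subset_span ⟨s, br p (br a b), ?_, rfl⟩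
  show _ ∈ Submodule.span K {x : A | ∃ c l : A, l ∈ lcs K A 2 ∧ x = c * l - l * c}
  refine Submodule.subset_span ⟨p, br a b, ?_, rfl⟩
  show _ ∈ Submodule.span K {x : A | ∃ c l : A, l ∈ lcs K A 1 ∧ x = c * l - l * c}
  exact Submodule.subset_span ⟨a, b, trivial, rfl⟩

/-- In the free associative algebra `A = FreeAlgebra K X` over a field `K` of characteristic
zero, for any `x y z u v : A`, the element `[x·[y,[z,u]], v]` lies in `L₄`. -/
theorem freeAlgebra_br_mul_triple_mem_lcs_four
    (K : Type*) [Field K] [CharZero K] (X : Type*)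
    (x y z u v : FreeAlgebra K X) :
    br (x * br y (br z u)) v ∈ lcs K (FreeAlgebra K X) 4 := by
  have key : (3 : FreeAlgebra K X) * br (x * br y (br z u)) v = br z (br (x * y) (br u v)) + br z (br (x * y) (br u v)) - br z (br u (br (x * y) v)) - br z (br u (br (x * y) v)) - br z (br u (br (x * y) v)) - br u (br (x * y) (br z v)) + br u (br z (br (x * y) v)) + br (x * z) (br y (br u v)) - br y (br u (br (x * z) v)) - br y (br u (br (x * z) v)) - br y (br u (br (x * z) v)) - br u (br (x * z) (br y v)) + br u (br y (br (x * z) v)) + br u (br y (br (x * z) v)) + br u (br y (br (x * z) v)) + br u (br y (br (x * z) v)) + br (x * u) (br z (br y v)) + br (x * u) (br z (br y v)) + br (x * u) (br z (br y v)) - br y (br (x * u) (br z v)) + br y (br z (br (x * u) v)) + br y (br z (br (x * u) v)) - br z (br (x * u) (br y v)) - br z (br (x * u) (br y v)) + br z (br y (br (x * u) v)) - br (x * v) (br y (br z u)) - br (x * v) (br y (br z u)) - br (x * v) (br y (br z u)) + br (x * v) (br z (br y u)) + br (x * v) (br z (br y u)) + br (x * v) (br z (br y u)) + br y (br (x * v)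 (br z u)) + br y (br z (br (x * v) u)) - br z (br (x * v) (br y u)) - br z (br y (br (x * v) u)) - br (y * x) (br u (br z v)) - br z (br (y * x) (br u v)) + br z (br u (br (y * x) v)) + br z (br u (br (y * x) v)) - br u (br z (br (y * x) v)) - br (y * z) (br x (br u v)) - br (y * z) (br x (br u v)) - br (y * z) (br u (br x v)) + br x (br (y * z) (br u v)) + br x (br (y * z) (br u v)) + br x (br u (br (y * z) v)) + br x (br u (br (y * z) v)) + br u (br (y * z) (br x v)) + br u (br (y * z) (br x v)) + br u (br (y * z) (br x v)) - br u (br x (br (y * z) v)) + br (y * u) (br x (br z v)) - br (y * u) (br z (br x v)) - br (y * u) (br z (br x v)) - br x (br (y * u) (br z v)) - br x (br z (br (y * u) v)) - br (y * v) (br x (br z u)) - br (y * v) (br z (br x u)) + br x (br (y * v) (br z u)) + br x (br z (br (y * v) u)) + br z (br (y * v) (br x u)) + br z (br (y * v) (br x u)) + br z (br (y * v) (br x u)) - br z (br x (br (y * v) u)) - br z (br x (br (y * v) u)) - br z (br x (br (y * v) u)) - br (z * x) (br y (br u v)) - br (z * x) (br y (br u v)) + br (z * x) (br u (br y v)) +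 br y (br u (br (z * x) v)) - br u (br (z * x) (br y v)) - br u (br (z * x) (br y v)) + br (z * y) (br u (br x v)) + br x (br u (br (z * y) v)) - br u (br (z * y) (br x v)) - br u (br (z * y) (br x v)) + br (z * u) (br x (br y v)) + br (z * u) (br x (br y v)) - br (z * u) (br y (br x v)) - br x (br (z * u) (br y v)) - br x (br (z * u) (br y v)) + br x (br y (br (z * u) v)) + br (z * v) (br x (br y u)) + br (z * v) (br x (br y u)) + br (z * v) (br x (br y u)) + br (z * v) (br x (br y u)) - br (z * v) (br y (br x u)) - br (z * v) (br y (br x u)) - br x (br (z * v) (br y u)) - br x (br (z * v) (br y u)) - br x (br (z * v) (br y u)) - br x (br (z * v) (br y u)) + br x (br y (br (z * v) u)) + br x (br y (br (z * v) u)) := by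
    simp only [br]; noncomm_ring
  have hR : (br z (br (x * y) (br u v)) + br z (br (x * y) (br u v)) - br z (br u (br (x * y) v)) - br z (br u (br (x * y) v)) - br z (br u (br (x * y) v)) - br u (br (x * y) (br z v)) + br u (br z (br (x * y) v)) + br (x * z) (br y (br u v)) - br y (br u (br (x * z) v)) - br y (br u (br (x * z) v)) - br y (br u (br (x * z) v)) - br u (br (x * z) (br y v)) + br u (br y (br (x * z) v)) + br u (br y (br (x * z) v)) + br u (br y (br (x * z) v)) + br u (br y (br (x * z) v)) + br (x * u) (br z (br y v)) + br (x * u) (br z (br y v)) + br (x * u) (br z (br y v)) - br y (br (x * u) (br z v)) + br y (br z (br (x * u) v)) + br y (br z (br (x * u) v)) - br z (br (x * u) (br y v)) - br z (br (x * u) (br y v)) + br z (br y (br (x * u) v)) - br (x * v) (br y (br z u)) - br (x * v) (br y (br z u)) - br (x * v) (br y (br z u)) + br (x * v) (br z (br y u)) + br (x * v) (br z (br y u)) + br (x * v) (br z (br y u)) + br y (br (x * v) (br z u)) + br y (br z (br (x * v) u)) - br z (br (x * v) (br y u)) - br z (br y (br (x * v) u)) - br (y * x) (br u (br z v)) - br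 z (br (y * x) (br u v)) + br z (br u (br (y * x) v)) + br z (br u (br (y * x) v)) - br u (br z (br (y * x) v)) - br (y * z) (br x (br u v)) - br (y * z) (br x (br u v)) - br (y * z) (br u (br x v)) + br x (br (y * z) (br u v)) + br x (br (y * z) (br u v)) + br x (br u (br (y * z) v)) + br x (br u (br (y * z) v)) + br u (br (y * z) (br x v)) + br u (br (y * z) (br x v)) + br u (br (y * z) (br x v)) - br u (br x (br (y * z) v)) + br (y * u) (br x (br z v)) - br (y * u) (br z (br x v)) - br (y * u) (br z (br x v)) - br x (br (y * u) (br z v)) - br x (br z (br (y * u) v)) - br (y * v) (br x (br z u)) - br (y * v) (br z (br x u)) + br x (br (y * v) (br z u)) + br x (br z (br (y * v) u)) + br z (br (y * v) (br x u)) + br z (br (y * v) (br x u)) + br z (br (y * v) (br x u)) - br z (br x (br (y * v) u)) - br z (br x (br (y * v) u)) - br z (br x (br (y * v) u)) - br (z * x) (br y (br u v)) - br (z * x) (br y (br u v)) + br (z * x) (br u (br y v)) + br y (br u (br (z * x) v)) - br u (br (z * x) (br y v)) - br u (br (z * x) (br y v)) + br (z * y) (br u (br x v)) + br x (br u (br (z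 * y) v)) - br u (br (z * y) (br x v)) - br u (br (z * y) (br x v)) + br (z * u) (br x (br y v)) + br (z * u) (br x (br y v)) - br (z * u) (br y (br x v)) - br x (br (z * u) (br y v)) - br x (br (z * u) (br y v)) + br x (br y (br (z * u) v)) + br (z * v) (br x (br y u)) + br (z * v) (br x (br y u)) + br (z * v) (br x (br y u)) + br (z * v) (br x (br y u)) - br (z * v) (br y (br x u)) - br (z * v) (br y (br x u)) - br x (br (z * v) (br y u)) - br x (br (z * v) (br y u)) - br x (br (z * v) (br y u)) - br x (br (z * v) (br y u)) + br x (br y (br (z * v) u)) + br x (br y (br (z * v) u)) : FreeAlgebra K X) ∈ lcs K (FreeAlgebra K X) 4 :=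
    (add_mem (add_mem (sub_mem (sub_mem (sub_mem (sub_mem (sub_mem (sub_mem (add_mem (add_mem (add_mem (add_mem (add_mem (sub_mem (sub_mem (sub_mem (add_mem (add_mem (sub_mem (sub_mem (add_mem (add_mem (sub_mem (sub_mem (add_mem (add_mem (sub_mem (sub_mem (sub_mem (sub_mem (sub_mem (add_mem (add_mem (add_mem (add_mem (add_mem (sub_mem (sub_mem (sub_mem (sub_mem (sub_mem (sub_mem (add_mem (sub_mem (add_mem (add_mem (add_mem (add_mem (add_mem (add_mem (add_mem (sub_mem (sub_mem (sub_mem (sub_mem (add_mem (add_mem (sub_mem (sub_mem (sub_mem (sub_mem (add_mem (add_mem (add_mem (add_mem (add_mem (sub_mem (sub_mem (sub_mem (add_mem (sub_mem (sub_mem (add_mem (add_mem (sub_mem (add_mem (add_mem (add_mem (add_mem (add_mem (add_mem (add_mem (sub_mem (sub_mem (sub_mem (sub_mem (add_mem (add_mem (sub_mem (sub_mem (sub_mem (sub_mem (add_mem (mem4 z (x * y) u v) (mem4 z (x * y) u v)) (mem4 z u (x * y) v)) (mem4 z u (x * y) v)) (mem4 z u (x * y) v)) (mem4 u (x * y) z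 v)) (mem4 u z (x * y) v)) (mem4 (x * z) y u v)) (mem4 y u (x * z) v)) (mem4 y u (x * z) v)) (mem4 y u (x * z) v)) (mem4 u (x * z) y v)) (mem4 u y (x * z) v)) (mem4 u y (x * z) v)) (mem4 u y (x * z) v)) (mem4 u y (x * z) v)) (mem4 (x * u) z y v)) (mem4 (x * u) z y v)) (mem4 (x * u) z y v)) (mem4 y (x * u) z v)) (mem4 y z (x * u) v)) (mem4 y z (x * u) v)) (mem4 z (x * u) y v)) (mem4 z (x * u) y v)) (mem4 z y (x * u) v)) (mem4 (x * v) y z u)) (mem4 (x * v) y z u)) (mem4 (x * v) y z u)) (mem4 (x * v) z y u)) (mem4 (x * v) z y u)) (mem4 (x * v) z y u)) (mem4 y (x * v) z u)) (mem4 y z (x * v) u)) (mem4 z (x * v) y u)) (mem4 z y (x * v) u)) (mem4 (y * x) u z v)) (mem4 z (y * x) u v)) (mem4 z u (y * x) v)) (mem4 z u (y * x) v)) (mem4 u z (y * x) v)) (mem4 (y * z) x u v)) (mem4 (y * z) x u v)) (mem4 (y * z) u x v)) (mem4 x (y * z) u v)) (mem4 x (y * z) u v)) (mem4 x u (y * z)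 v)) (mem4 x u (y * z) v)) (mem4 u (y * z) x v)) (mem4 u (y * z) x v)) (mem4 u (y * z) x v)) (mem4 u x (y * z) v)) (mem4 (y * u) x z v)) (mem4 (y * u) z x v)) (mem4 (y * u) z x v)) (mem4 x (y * u) z v)) (mem4 x z (y * u) v)) (mem4 (y * v) x z u)) (mem4 (y * v) z x u)) (mem4 x (y * v) z u)) (mem4 x z (y * v) u)) (mem4 z (y * v) x u)) (mem4 z (y * v) x u)) (mem4 z (y * v) x u)) (mem4 z x (y * v) u)) (mem4 z x (y * v) u)) (mem4 z x (y * v) u)) (mem4 (z * x) y u v)) (mem4 (z * x) y u v)) (mem4 (z * x) u y v)) (mem4 y u (z * x) v)) (mem4 u (z * x) y v)) (mem4 u (z * x) y v)) (mem4 (z * y) u x v)) (mem4 x u (z * y) v)) (mem4 u (z * y) x v)) (mem4 u (z * y) x v)) (mem4 (z * u) x y v)) (mem4 (z * u) x y v)) (mem4 (z * u) y x v)) (mem4 x (z * u) y v)) (mem4 x (z * u) y v)) (mem4 x y (z * u) v)) (mem4 (z * v) x y u)) (mem4 (z * v) x y u)) (mem4 (z * v) x y u)) (mem4 (z * v) x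 y u)) (mem4 (z * v) y x u)) (mem4 (z * v) y x u)) (mem4 x (z * v) y u)) (mem4 x (z * v) y u)) (mem4 x (z * v) y u)) (mem4 x (z * v) y u)) (mem4 x y (z * v) u)) (mem4 x y (z * v) u))
  have h3 : (3 : K) • br (x * br y (br z u)) v ∈ lcs K (FreeAlgebra K X) 4 := by
    rw [Algebra.smul_def, map_ofNat, key]
    exact hR
  have h := Submodule.smul_mem (lcs K (FreeAlgebra K X) 4) ((3 : K)⁻¹) h3
  rwa [inv_smul_smul₀ (by norm_num : (3 : K) ≠ 0)] at h
end

section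
/- In the free associative algebra A over a field of characteristic zero, with lower central series L_k and two-sided ideals M_k := A·L_k·A generated by L_k, one has [M_3, L_1] ⊆ L_4. -/
/-- `mIdeal K A j = A·L_j·A`, the two-sided ideal generated by `L_j`. -/
def mIdeal (K : Type*) [Field K] (A : Type*) [Ring A] [Algebra K A] (j : ℕ) : Submodule K A :=
  Submodule.span K {x : A | ∃ a l b : A, l ∈ lcs K A j ∧ x = a * l * b}

section helpers
variable {K : Type*} [Field K] {A : Type*} [Ring A] [Algebra K A]

lemma mem_lcs2 (u v : A) : u * v - v * u ∈ lcs K A 2 :=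
  Submodule.subset_span ⟨u, v, by trivial, rfl⟩

lemma mem_lcs_succ {k : ℕ} (u : A) {l : A} (hl : l ∈ lcs K A (k+1)) :
    u * l - l * u ∈ lcs K A (k+2) :=
  Submodule.subset_span ⟨u, l, hl, rfl⟩

lemma mem_lcs4_nest (w1 w2 w3 w4 : A) :
    w1 * (w2 * (w3 * w4 - w4 * w3) - (w3 * w4 - w4 * w3) * w2)
      - (w2 * (w3 * w4 - w4 * w3) - (w3 * w4 - w4 * w3) * w2) * w1 ∈ lcs K A 4 :=
  mem_lcs_succ _ (mem_lcs_succ _ (mem_lcs2 _ _))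

lemma lcs_succ_le : ∀ k : ℕ, lcs K A (k+2) ≤ lcs K A (k+1)
  | 0 => le_top
  | (k+1) => by
    rw [show lcs K A (k+1+2) = Submodule.span K
        {x : A | ∃ a l : A, l ∈ lcs K A (k+2) ∧ x = a * l - l * a} from rfl]
    rw [Submodule.span_le]
    rintro w ⟨a, l, hl, rfl⟩
    exact Submodule.subset_span ⟨a, l, lcs_succ_le k hl, rfl⟩

end helpers

section key
variable {K : Type*} [Field K] [CharZero K] {X : Type*}

/-- The key 37-term identity: `3·[u·[x,[y,z]], c]` is an explicit combination of
`L₄`-generators. -/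
lemma key_identity (u x y z c : FreeAlgebra K X) :
    (3:FreeAlgebra K X) * br (u*(x*(y*z-z*y)-(y*z-z*y)*x)) c =
      (u*(x*(y*(z*c)-(z*c)*y)-(y*(z*c)-(z*c)*y)*x)-(x*(y*(z*c)-(z*c)*y)-(y*(z*c)-(z*c)*y)*x)*u) - (u*(x*((y*c)*z-z*(y*c))-((y*c)*z-z*(y*c))*x)-(x*((y*c)*z-z*(y*c))-((y*c)*z-z*(y*c))*x)*u) - (u*(y*(x*(z*c)-(z*c)*x)-(x*(z*c)-(z*c)*x)*y)-(y*(x*(z*c)-(z*c)*x)-(x*(z*c)-(z*c)*x)*y)*u) + (u*((y*c)*(x*z-z*x)-(x*z-z*x)*(y*c))-((y*c)*(x*z-z*x)-(x*z-z*x)*(y*c))*u) + (2:FreeAlgebra K X)*((u*x)*(y*(z*c-c*z)-(z*c-c*z)*y)-(y*(z*c-c*z)-(z*c-c*z)*y)*(u*x)) - (2:FreeAlgebra K X)*((u*x)*(z*(y*c-c*y)-(y*c-c*y)*z)-(z*(y*c-c*y)-(y*c-c*y)*z)*(u*x)) + ((u*y)*(x*(z*c-c*z)-(z*c-c*z)*x)-(x*(z*c-c*z)-(z*c-c*z)*x)*(u*y))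 - ((u*y)*(z*(x*c-c*x)-(x*c-c*x)*z)-(z*(x*c-c*x)-(x*c-c*x)*z)*(u*y)) - ((u*z)*(x*(y*c-c*y)-(y*c-c*y)*x)-(x*(y*c-c*y)-(y*c-c*y)*x)*(u*z)) + ((u*z)*(y*(x*c-c*x)-(x*c-c*x)*y)-(y*(x*c-c*x)-(x*c-c*x)*y)*(u*z)) - (2:FreeAlgebra K X)*(x*(u*(y*(z*c)-(z*c)*y)-(y*(z*c)-(z*c)*y)*u)-(u*(y*(z*c)-(z*c)*y)-(y*(z*c)-(z*c)*y)*u)*x) + (2:FreeAlgebra K X)*(x*(u*((y*z)*c-c*(y*z))-((y*z)*c-c*(y*z))*u)-(u*((y*z)*c-c*(y*z))-((y*z)*c-c*(y*z))*u)*x) - (x*(y*(u*(z*c)-(z*c)*u)-(u*(z*c)-(z*c)*u)*y)-(y*(u*(z*c)-(z*c)*u)-(u*(z*c)-(z*c)*u)*y)*x) + (3:FreeAlgebra K X)*(x*(y*((u*z)*c-c*(u*z))-((u*z)*c-c*(u*z))*y)-(y*((u*z)*c-c*(u*z))-((u*z)*c-c*(u*z))*y)*x) - (2:FreeAlgebra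 K X)*(x*((y*u)*(z*c-c*z)-(z*c-c*z)*(y*u))-((y*u)*(z*c-c*z)-(z*c-c*z)*(y*u))*x) - (2:FreeAlgebra K X)*(x*((y*z)*(u*c-c*u)-(u*c-c*u)*(y*z))-((y*z)*(u*c-c*u)-(u*c-c*u)*(y*z))*x) + (x*((y*c)*(u*z-z*u)-(u*z-z*u)*(y*c))-((y*c)*(u*z-z*u)-(u*z-z*u)*(y*c))*x) - (x*(z*((u*y)*c-c*(u*y))-((u*y)*c-c*(u*y))*z)-(z*((u*y)*c-c*(u*y))-((u*y)*c-c*(u*y))*z)*x) + (2:FreeAlgebra K X)*((x*y)*(z*(u*c-c*u)-(u*c-c*u)*z)-(z*(u*c-c*u)-(u*c-c*u)*z)*(x*y)) + (2:FreeAlgebra K X)*((x*c)*(u*(y*z-z*y)-(y*z-z*y)*u)-(u*(y*z-z*y)-(y*z-z*y)*u)*(x*c)) - (y*(u*(x*(z*c)-(z*c)*x)-(x*(z*c)-(z*c)*x)*u)-(u*(x*(z*c)-(z*c)*x)-(x*(z*c)-(z*c)*x)*u)*y) + (y*(u*((x*z)*c-c*(x*z))-((x*z)*c-c*(x*z))*u)-(u*((x*z)*c-c*(x*z))-((x*z)*c-c*(x*z))*u)*y)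 + (y*(u*((x*c)*z-z*(x*c))-((x*c)*z-z*(x*c))*u)-(u*((x*c)*z-z*(x*c))-((x*c)*z-z*(x*c))*u)*y) - (y*((u*c)*(x*z-z*x)-(x*z-z*x)*(u*c))-((u*c)*(x*z-z*x)-(x*z-z*x)*(u*c))*y) + (3:FreeAlgebra K X)*(y*(x*(u*(z*c)-(z*c)*u)-(u*(z*c)-(z*c)*u)*x)-(x*(u*(z*c)-(z*c)*u)-(u*(z*c)-(z*c)*u)*x)*y) - (2:FreeAlgebra K X)*(y*(x*((u*z)*c-c*(u*z))-((u*z)*c-c*(u*z))*x)-(x*((u*z)*c-c*(u*z))-((u*z)*c-c*(u*z))*x)*y) - (y*(x*((u*c)*z-z*(u*c))-((u*c)*z-z*(u*c))*x)-(x*((u*c)*z-z*(u*c))-((u*c)*z-z*(u*c))*x)*y) - (y*((x*u)*(z*c-c*z)-(z*c-c*z)*(x*u))-((x*u)*(z*c-c*z)-(z*c-c*z)*(x*u))*y) - (2:FreeAlgebra K X)*(y*((x*z)*(u*c-c*u)-(u*c-c*u)*(x*z))-((x*z)*(u*c-c*u)-(u*c-c*u)*(x*z))*y) - (y*((x*c)*(u*z-z*u)-(u*z-z*u)*(x*c))-((x*c)*(u*z-z*u)-(u*z-z*u)*(x*c))*y)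 - (y*(z*((u*x)*c-c*(u*x))-((u*x)*c-c*(u*x))*z)-(z*((u*x)*c-c*(u*x))-((u*x)*c-c*(u*x))*z)*y) + ((y*z)*(x*(u*c-c*u)-(u*c-c*u)*x)-(x*(u*c-c*u)-(u*c-c*u)*x)*(y*z)) + ((y*c)*(u*(x*z-z*x)-(x*z-z*x)*u)-(u*(x*z-z*x)-(x*z-z*x)*u)*(y*c)) - ((y*c)*(x*(u*z-z*u)-(u*z-z*u)*x)-(x*(u*z-z*u)-(u*z-z*u)*x)*(y*c)) - (z*(u*((x*y)*c-c*(x*y))-((x*y)*c-c*(x*y))*u)-(u*((x*y)*c-c*(x*y))-((x*y)*c-c*(x*y))*u)*z) + (z*((x*u)*(y*c-c*y)-(y*c-c*y)*(x*u))-((x*u)*(y*c-c*y)-(y*c-c*y)*(x*u))*z) + (2:FreeAlgebra K X)*(z*(y*((u*x)*c-c*(u*x))-((u*x)*c-c*(u*x))*y)-(y*((u*x)*c-c*(u*x))-((u*x)*c-c*(u*x))*y)*z) := by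
  simp only [br]
  noncomm_ring

lemma key_mem (u x y z c : FreeAlgebra K X) :
    br (u*(x*(y*z-z*y)-(y*z-z*y)*x)) c ∈ lcs K (FreeAlgebra K X) 4 := by
  have h3 : (3:FreeAlgebra K X) * br (u*(x*(y*z-z*y)-(y*z-z*y)*x)) c
      ∈ lcs K (FreeAlgebra K X) 4 := by
    rw [key_identity]
    have hT0 : (u*(x*(y*(z*c)-(z*c)*y)-(y*(z*c)-(z*c)*y)*x)-(x*(y*(z*c)-(z*c)*y)-(y*(z*c)-(z*c)*y)*x)*u) ∈ lcs K (FreeAlgebra K X) 4 := mem_lcs4_nest u x y (z*c)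
    have hT1 : (u*(x*((y*c)*z-z*(y*c))-((y*c)*z-z*(y*c))*x)-(x*((y*c)*z-z*(y*c))-((y*c)*z-z*(y*c))*x)*u) ∈ lcs K (FreeAlgebra K X) 4 := mem_lcs4_nest u x (y*c) z
    have hT2 : (u*(y*(x*(z*c)-(z*c)*x)-(x*(z*c)-(z*c)*x)*y)-(y*(x*(z*c)-(z*c)*x)-(x*(z*c)-(z*c)*x)*y)*u) ∈ lcs K (FreeAlgebra K X) 4 := mem_lcs4_nest u y x (z*c)
    have hT3 : (u*((y*c)*(x*z-z*x)-(x*z-z*x)*(y*c))-((y*c)*(x*z-z*x)-(x*z-z*x)*(y*c))*u) ∈ lcs K (FreeAlgebra K X) 4 := mem_lcs4_nest u (y*c) x z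
    have hT4 : (2:FreeAlgebra K X)*((u*x)*(y*(z*c-c*z)-(z*c-c*z)*y)-(y*(z*c-c*z)-(z*c-c*z)*y)*(u*x)) ∈ lcs K (FreeAlgebra K X) 4 := by
      rw [show ((2:FreeAlgebra K X)*((u*x)*(y*(z*c-c*z)-(z*c-c*z)*y)-(y*(z*c-c*z)-(z*c-c*z)*y)*(u*x))) = ((2:K) • ((u*x)*(y*(z*c-c*z)-(z*c-c*z)*y)-(y*(z*c-c*z)-(z*c-c*z)*y)*(u*x))) by
        rw [Algebra.smul_def, map_ofNat]]
      exact Submodule.smul_mem _ _ (mem_lcs4_nest (u*x) y z c)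
    have hT5 : (2:FreeAlgebra K X)*((u*x)*(z*(y*c-c*y)-(y*c-c*y)*z)-(z*(y*c-c*y)-(y*c-c*y)*z)*(u*x)) ∈ lcs K (FreeAlgebra K X) 4 := by
      rw [show ((2:FreeAlgebra K X)*((u*x)*(z*(y*c-c*y)-(y*c-c*y)*z)-(z*(y*c-c*y)-(y*c-c*y)*z)*(u*x))) = ((2:K) • ((u*x)*(z*(y*c-c*y)-(y*c-c*y)*z)-(z*(y*c-c*y)-(y*c-c*y)*z)*(u*x))) by
        rw [Algebra.smul_def, map_ofNat]]
      exact Submodule.smul_mem _ _ (mem_lcs4_nest (u*x) z y c)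
    have hT6 : ((u*y)*(x*(z*c-c*z)-(z*c-c*z)*x)-(x*(z*c-c*z)-(z*c-c*z)*x)*(u*y)) ∈ lcs K (FreeAlgebra K X) 4 := mem_lcs4_nest (u*y) x z c
    have hT7 : ((u*y)*(z*(x*c-c*x)-(x*c-c*x)*z)-(z*(x*c-c*x)-(x*c-c*x)*z)*(u*y)) ∈ lcs K (FreeAlgebra K X) 4 := mem_lcs4_nest (u*y) z x c
    have hT8 : ((u*z)*(x*(y*c-c*y)-(y*c-c*y)*x)-(x*(y*c-c*y)-(y*c-c*y)*x)*(u*z)) ∈ lcs K (FreeAlgebra K X) 4 := mem_lcs4_nest (u*z) x y c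
    have hT9 : ((u*z)*(y*(x*c-c*x)-(x*c-c*x)*y)-(y*(x*c-c*x)-(x*c-c*x)*y)*(u*z)) ∈ lcs K (FreeAlgebra K X) 4 := mem_lcs4_nest (u*z) y x c
    have hT10 : (2:FreeAlgebra K X)*(x*(u*(y*(z*c)-(z*c)*y)-(y*(z*c)-(z*c)*y)*u)-(u*(y*(z*c)-(z*c)*y)-(y*(z*c)-(z*c)*y)*u)*x) ∈ lcs K (FreeAlgebra K X) 4 := by
      rw [show ((2:FreeAlgebra K X)*(x*(u*(y*(z*c)-(z*c)*y)-(y*(z*c)-(z*c)*y)*u)-(u*(y*(z*c)-(z*c)*y)-(y*(z*c)-(z*c)*y)*u)*x)) = ((2:K) • (x*(u*(y*(z*c)-(z*c)*y)-(y*(z*c)-(z*c)*y)*u)-(u*(y*(z*c)-(z*c)*y)-(y*(z*c)-(z*c)*y)*u)*x)) by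
        rw [Algebra.smul_def, map_ofNat]]
      exact Submodule.smul_mem _ _ (mem_lcs4_nest x u y (z*c))
    have hT11 : (2:FreeAlgebra K X)*(x*(u*((y*z)*c-c*(y*z))-((y*z)*c-c*(y*z))*u)-(u*((y*z)*c-c*(y*z))-((y*z)*c-c*(y*z))*u)*x) ∈ lcs K (FreeAlgebra K X) 4 := by
      rw [show ((2:FreeAlgebra K X)*(x*(u*((y*z)*c-c*(y*z))-((y*z)*c-c*(y*z))*u)-(u*((y*z)*c-c*(y*z))-((y*z)*c-c*(y*z))*u)*x)) = ((2:K) • (x*(u*((y*z)*c-c*(y*z))-((y*z)*c-c*(y*z))*u)-(u*((y*z)*c-c*(y*z))-((y*z)*c-c*(y*z))*u)*x)) by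
        rw [Algebra.smul_def, map_ofNat]]
      exact Submodule.smul_mem _ _ (mem_lcs4_nest x u (y*z) c)
    have hT12 : (x*(y*(u*(z*c)-(z*c)*u)-(u*(z*c)-(z*c)*u)*y)-(y*(u*(z*c)-(z*c)*u)-(u*(z*c)-(z*c)*u)*y)*x) ∈ lcs K (FreeAlgebra K X) 4 := mem_lcs4_nest x y u (z*c)
    have hT13 : (3:FreeAlgebra K X)*(x*(y*((u*z)*c-c*(u*z))-((u*z)*c-c*(u*z))*y)-(y*((u*z)*c-c*(u*z))-((u*z)*c-c*(u*z))*y)*x) ∈ lcs K (FreeAlgebra K X) 4 := by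
      rw [show ((3:FreeAlgebra K X)*(x*(y*((u*z)*c-c*(u*z))-((u*z)*c-c*(u*z))*y)-(y*((u*z)*c-c*(u*z))-((u*z)*c-c*(u*z))*y)*x)) = ((3:K) • (x*(y*((u*z)*c-c*(u*z))-((u*z)*c-c*(u*z))*y)-(y*((u*z)*c-c*(u*z))-((u*z)*c-c*(u*z))*y)*x)) by
        rw [Algebra.smul_def, map_ofNat]]
      exact Submodule.smul_mem _ _ (mem_lcs4_nest x y (u*z) c)
    have hT14 : (2:FreeAlgebra K X)*(x*((y*u)*(z*c-c*z)-(z*c-c*z)*(y*u))-((y*u)*(z*c-c*z)-(z*c-c*z)*(y*u))*x) ∈ lcs K (FreeAlgebra K X) 4 := by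
      rw [show ((2:FreeAlgebra K X)*(x*((y*u)*(z*c-c*z)-(z*c-c*z)*(y*u))-((y*u)*(z*c-c*z)-(z*c-c*z)*(y*u))*x)) = ((2:K) • (x*((y*u)*(z*c-c*z)-(z*c-c*z)*(y*u))-((y*u)*(z*c-c*z)-(z*c-c*z)*(y*u))*x)) by
        rw [Algebra.smul_def, map_ofNat]]
      exact Submodule.smul_mem _ _ (mem_lcs4_nest x (y*u) z c)
    have hT15 : (2:FreeAlgebra K X)*(x*((y*z)*(u*c-c*u)-(u*c-c*u)*(y*z))-((y*z)*(u*c-c*u)-(u*c-c*u)*(y*z))*x) ∈ lcs K (FreeAlgebra K X) 4 := by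
      rw [show ((2:FreeAlgebra K X)*(x*((y*z)*(u*c-c*u)-(u*c-c*u)*(y*z))-((y*z)*(u*c-c*u)-(u*c-c*u)*(y*z))*x)) = ((2:K) • (x*((y*z)*(u*c-c*u)-(u*c-c*u)*(y*z))-((y*z)*(u*c-c*u)-(u*c-c*u)*(y*z))*x)) by
        rw [Algebra.smul_def, map_ofNat]]
      exact Submodule.smul_mem _ _ (mem_lcs4_nest x (y*z) u c)
    have hT16 : (x*((y*c)*(u*z-z*u)-(u*z-z*u)*(y*c))-((y*c)*(u*z-z*u)-(u*z-z*u)*(y*c))*x) ∈ lcs K (FreeAlgebra K X) 4 := mem_lcs4_nest x (y*c) u z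
    have hT17 : (x*(z*((u*y)*c-c*(u*y))-((u*y)*c-c*(u*y))*z)-(z*((u*y)*c-c*(u*y))-((u*y)*c-c*(u*y))*z)*x) ∈ lcs K (FreeAlgebra K X) 4 := mem_lcs4_nest x z (u*y) c
    have hT18 : (2:FreeAlgebra K X)*((x*y)*(z*(u*c-c*u)-(u*c-c*u)*z)-(z*(u*c-c*u)-(u*c-c*u)*z)*(x*y)) ∈ lcs K (FreeAlgebra K X) 4 := by
      rw [show ((2:FreeAlgebra K X)*((x*y)*(z*(u*c-c*u)-(u*c-c*u)*z)-(z*(u*c-c*u)-(u*c-c*u)*z)*(x*y))) = ((2:K) • ((x*y)*(z*(u*c-c*u)-(u*c-c*u)*z)-(z*(u*c-c*u)-(u*c-c*u)*z)*(x*y))) by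
        rw [Algebra.smul_def, map_ofNat]]
      exact Submodule.smul_mem _ _ (mem_lcs4_nest (x*y) z u c)
    have hT19 : (2:FreeAlgebra K X)*((x*c)*(u*(y*z-z*y)-(y*z-z*y)*u)-(u*(y*z-z*y)-(y*z-z*y)*u)*(x*c)) ∈ lcs K (FreeAlgebra K X) 4 := by
      rw [show ((2:FreeAlgebra K X)*((x*c)*(u*(y*z-z*y)-(y*z-z*y)*u)-(u*(y*z-z*y)-(y*z-z*y)*u)*(x*c))) = ((2:K) • ((x*c)*(u*(y*z-z*y)-(y*z-z*y)*u)-(u*(y*z-z*y)-(y*z-z*y)*u)*(x*c))) by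
        rw [Algebra.smul_def, map_ofNat]]
      exact Submodule.smul_mem _ _ (mem_lcs4_nest (x*c) u y z)
    have hT20 : (y*(u*(x*(z*c)-(z*c)*x)-(x*(z*c)-(z*c)*x)*u)-(u*(x*(z*c)-(z*c)*x)-(x*(z*c)-(z*c)*x)*u)*y) ∈ lcs K (FreeAlgebra K X) 4 := mem_lcs4_nest y u x (z*c)
    have hT21 : (y*(u*((x*z)*c-c*(x*z))-((x*z)*c-c*(x*z))*u)-(u*((x*z)*c-c*(x*z))-((x*z)*c-c*(x*z))*u)*y) ∈ lcs K (FreeAlgebra K X) 4 := mem_lcs4_nest y u (x*z) c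
    have hT22 : (y*(u*((x*c)*z-z*(x*c))-((x*c)*z-z*(x*c))*u)-(u*((x*c)*z-z*(x*c))-((x*c)*z-z*(x*c))*u)*y) ∈ lcs K (FreeAlgebra K X) 4 := mem_lcs4_nest y u (x*c) z
    have hT23 : (y*((u*c)*(x*z-z*x)-(x*z-z*x)*(u*c))-((u*c)*(x*z-z*x)-(x*z-z*x)*(u*c))*y) ∈ lcs K (FreeAlgebra K X) 4 := mem_lcs4_nest y (u*c) x z
    have hT24 : (3:FreeAlgebra K X)*(y*(x*(u*(z*c)-(z*c)*u)-(u*(z*c)-(z*c)*u)*x)-(x*(u*(z*c)-(z*c)*u)-(u*(z*c)-(z*c)*u)*x)*y) ∈ lcs K (FreeAlgebra K X) 4 := by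
      rw [show ((3:FreeAlgebra K X)*(y*(x*(u*(z*c)-(z*c)*u)-(u*(z*c)-(z*c)*u)*x)-(x*(u*(z*c)-(z*c)*u)-(u*(z*c)-(z*c)*u)*x)*y)) = ((3:K) • (y*(x*(u*(z*c)-(z*c)*u)-(u*(z*c)-(z*c)*u)*x)-(x*(u*(z*c)-(z*c)*u)-(u*(z*c)-(z*c)*u)*x)*y)) by
        rw [Algebra.smul_def, map_ofNat]]
      exact Submodule.smul_mem _ _ (mem_lcs4_nest y x u (z*c))
    have hT25 : (2:FreeAlgebra K X)*(y*(x*((u*z)*c-c*(u*z))-((u*z)*c-c*(u*z))*x)-(x*((u*z)*c-c*(u*z))-((u*z)*c-c*(u*z))*x)*y) ∈ lcs K (FreeAlgebra K X) 4 := by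
      rw [show ((2:FreeAlgebra K X)*(y*(x*((u*z)*c-c*(u*z))-((u*z)*c-c*(u*z))*x)-(x*((u*z)*c-c*(u*z))-((u*z)*c-c*(u*z))*x)*y)) = ((2:K) • (y*(x*((u*z)*c-c*(u*z))-((u*z)*c-c*(u*z))*x)-(x*((u*z)*c-c*(u*z))-((u*z)*c-c*(u*z))*x)*y)) by
        rw [Algebra.smul_def, map_ofNat]]
      exact Submodule.smul_mem _ _ (mem_lcs4_nest y x (u*z) c)
    have hT26 : (y*(x*((u*c)*z-z*(u*c))-((u*c)*z-z*(u*c))*x)-(x*((u*c)*z-z*(u*c))-((u*c)*z-z*(u*c))*x)*y) ∈ lcs K (FreeAlgebra K X) 4 := mem_lcs4_nest y x (u*c) z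
    have hT27 : (y*((x*u)*(z*c-c*z)-(z*c-c*z)*(x*u))-((x*u)*(z*c-c*z)-(z*c-c*z)*(x*u))*y) ∈ lcs K (FreeAlgebra K X) 4 := mem_lcs4_nest y (x*u) z c
    have hT28 : (2:FreeAlgebra K X)*(y*((x*z)*(u*c-c*u)-(u*c-c*u)*(x*z))-((x*z)*(u*c-c*u)-(u*c-c*u)*(x*z))*y) ∈ lcs K (FreeAlgebra K X) 4 := by
      rw [show ((2:FreeAlgebra K X)*(y*((x*z)*(u*c-c*u)-(u*c-c*u)*(x*z))-((x*z)*(u*c-c*u)-(u*c-c*u)*(x*z))*y)) = ((2:K) • (y*((x*z)*(u*c-c*u)-(u*c-c*u)*(x*z))-((x*z)*(u*c-c*u)-(u*c-c*u)*(x*z))*y)) by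
        rw [Algebra.smul_def, map_ofNat]]
      exact Submodule.smul_mem _ _ (mem_lcs4_nest y (x*z) u c)
    have hT29 : (y*((x*c)*(u*z-z*u)-(u*z-z*u)*(x*c))-((x*c)*(u*z-z*u)-(u*z-z*u)*(x*c))*y) ∈ lcs K (FreeAlgebra K X) 4 := mem_lcs4_nest y (x*c) u z
    have hT30 : (y*(z*((u*x)*c-c*(u*x))-((u*x)*c-c*(u*x))*z)-(z*((u*x)*c-c*(u*x))-((u*x)*c-c*(u*x))*z)*y) ∈ lcs K (FreeAlgebra K X) 4 := mem_lcs4_nest y z (u*x) c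
    have hT31 : ((y*z)*(x*(u*c-c*u)-(u*c-c*u)*x)-(x*(u*c-c*u)-(u*c-c*u)*x)*(y*z)) ∈ lcs K (FreeAlgebra K X) 4 := mem_lcs4_nest (y*z) x u c
    have hT32 : ((y*c)*(u*(x*z-z*x)-(x*z-z*x)*u)-(u*(x*z-z*x)-(x*z-z*x)*u)*(y*c)) ∈ lcs K (FreeAlgebra K X) 4 := mem_lcs4_nest (y*c) u x z
    have hT33 : ((y*c)*(x*(u*z-z*u)-(u*z-z*u)*x)-(x*(u*z-z*u)-(u*z-z*u)*x)*(y*c)) ∈ lcs K (FreeAlgebra K X) 4 := mem_lcs4_nest (y*c) x u z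
    have hT34 : (z*(u*((x*y)*c-c*(x*y))-((x*y)*c-c*(x*y))*u)-(u*((x*y)*c-c*(x*y))-((x*y)*c-c*(x*y))*u)*z) ∈ lcs K (FreeAlgebra K X) 4 := mem_lcs4_nest z u (x*y) c
    have hT35 : (z*((x*u)*(y*c-c*y)-(y*c-c*y)*(x*u))-((x*u)*(y*c-c*y)-(y*c-c*y)*(x*u))*z) ∈ lcs K (FreeAlgebra K X) 4 := mem_lcs4_nest z (x*u) y c
    have hT36 : (2:FreeAlgebra K X)*(z*(y*((u*x)*c-c*(u*x))-((u*x)*c-c*(u*x))*y)-(y*((u*x)*c-c*(u*x))-((u*x)*c-c*(u*x))*y)*z) ∈ lcs K (FreeAlgebra K X) 4 := by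
      rw [show ((2:FreeAlgebra K X)*(z*(y*((u*x)*c-c*(u*x))-((u*x)*c-c*(u*x))*y)-(y*((u*x)*c-c*(u*x))-((u*x)*c-c*(u*x))*y)*z)) = ((2:K) • (z*(y*((u*x)*c-c*(u*x))-((u*x)*c-c*(u*x))*y)-(y*((u*x)*c-c*(u*x))-((u*x)*c-c*(u*x))*y)*z)) by
        rw [Algebra.smul_def, map_ofNat]]
      exact Submodule.smul_mem _ _ (mem_lcs4_nest z y (u*x) c)
    exact add_mem (add_mem (sub_mem (sub_mem (add_mem (add_mem (sub_mem (sub_mem (sub_mem (sub_mem (sub_mem (sub_mem (add_mem (sub_mem (add_mem (add_mem (sub_mem (add_mem (add_mem (sub_mem (add_mem (sub_mem (sub_mem (add_mem (sub_mem (add_mem (sub_mem (add_mem (sub_mem (sub_mem (add_mem (sub_mem (add_mem (add_mem (sub_mem (sub_mem (hT0) hT1) hT2) hT3) hT4) hT5) hT6) hT7) hT8) hT9) hT10) hT11) hT12) hT13) hT14) hT15) hT16) hT17) hT18) hT19) hT20) hT21) hT22) hT23) hT24) hT25) hT26) hT27) hT28) hT29) hT30) hT31) hT32) hT33) hT34)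 hT35) hT36
  rw [show (3:FreeAlgebra K X) * br (u*(x*(y*z-z*y)-(y*z-z*y)*x)) c
      = (3:K) • br (u*(x*(y*z-z*y)-(y*z-z*y)*x)) c by
    rw [Algebra.smul_def, map_ofNat]] at h3
  have := Submodule.smul_mem (lcs K (FreeAlgebra K X) 4) ((3:K)⁻¹) h3
  rwa [smul_smul, inv_mul_cancel₀ (by norm_num : (3:K) ≠ 0), one_smul] at this

/-- K1 : for `l ∈ L₃`, `[u·l, c] ∈ L₄`. -/
lemma K1 (u c : FreeAlgebra K X) {l : FreeAlgebra K X}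
    (hl : l ∈ lcs K (FreeAlgebra K X) 3) :
    br (u * l) c ∈ lcs K (FreeAlgebra K X) 4 := by
  induction hl using Submodule.span_induction with
  | mem w hw =>
    obtain ⟨x, l2, hl2, rfl⟩ := hw
    induction hl2 using Submodule.span_induction with
    | mem w2 hw2 =>
      obtain ⟨y, z, -, rfl⟩ := hw2
      exact key_mem u x y z c
    | zero =>
      have : br (u * (x * (0:FreeAlgebra K X) - 0 * x)) c = 0 := by
        simp only [br]; noncomm_ring
      rw [this]; exact Submodule.zero_mem _
    | add s t _ _ hs ht =>
      have : br (u * (x * (s + t) - (s + t) * x)) c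
          = br (u * (x * s - s * x)) c + br (u * (x * t - t * x)) c := by
        simp only [br]; noncomm_ring
      rw [this]; exact Submodule.add_mem _ hs ht
    | smul k s _ hs =>
      have : br (u * (x * (k • s) - (k • s) * x)) c
          = k • br (u * (x * s - s * x)) c := by
        simp only [br, mul_smul_comm, smul_mul_assoc, ← smul_sub]
      rw [this]; exact Submodule.smul_mem _ _ hs
  | zero =>
    have : br (u * (0:FreeAlgebra K X)) c = 0 := by simp only [br]; noncomm_ring
    rw [this]; exact Submodule.zero_mem _
  | add s t _ _ hs ht =>
    have : br (u * (s + t)) c = br (u * s) c + br (u * t) c := by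
      simp only [br]; noncomm_ring
    rw [this]; exact Submodule.add_mem _ hs ht
  | smul k s _ hs =>
    have : br (u * (k • s)) c = k • br (u * s) c := by
      simp only [br, mul_smul_comm, smul_mul_assoc, ← smul_sub]
    rw [this]; exact Submodule.smul_mem _ _ hs

end key

/-- In the free associative algebra over a field of characteristic zero, `[M₃, L₁] ⊆ L₄`. -/
theorem br_mIdeal_three_L1_mem_lcs_four
    (K : Type*) [Field K] [CharZero K] (X : Type*)
    (m : FreeAlgebra K X) (hm : m ∈ mIdeal K (FreeAlgebra K X) 3)
    (a : FreeAlgebra K X) (ha : a ∈ lcs K (FreeAlgebra K X) 1) :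
    br m a ∈ lcs K (FreeAlgebra K X) 4 := by
  induction hm using Submodule.span_induction with
  | mem w hw =>
    obtain ⟨p, l, q, hl, rfl⟩ := hw
    -- p*l*q = (p*q)*l - p*(q*l - l*q)
    have hsplit : br (p * l * q) a
        = br ((p*q) * l) a - br (p * (q*l - l*q)) a := by
      simp only [br]; noncomm_ring
    rw [hsplit]
    refine Submodule.sub_mem _ (K1 (p*q) a hl) (K1 p a ?_)
    exact lcs_succ_le 2 (mem_lcs_succ q hl)
  | zero =>
    have : br (0:FreeAlgebra K X) a = 0 := by simp only [br]; noncomm_ring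
    rw [this]; exact Submodule.zero_mem _
  | add s t _ _ hs ht =>
    have : br (s + t) a = br s a + br t a := by simp only [br]; noncomm_ring
    rw [this]; exact Submodule.add_mem _ hs ht
  | smul k s _ hs =>
    have : br (k • s) a = k • br s a := by
      simp only [br, mul_smul_comm, smul_mul_assoc, ← smul_sub]
    rw [this]; exact Submodule.smul_mem _ _ hs
end
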